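/- arXiv:2601.13086 — 6 statements merged into one kernel-verified Lean document; each statement's English description precedes it below -/
import Mathlib

section
/- For every real ℓ > 0 and every real s > 0, the family k ↦ 1 − exp(−(s+k)ℓ) indexed by k ∈ ℕ is multipliable, the family m ↦ (1/m)·(exp(s·m·ℓ) − exp((s−1)·m·ℓ))⁻¹ indexed by integers m ≥ 1 is summable, and −log ∏_{k=0}^∞ (1 − e^{−(s+k)ℓ}) = ∑_{m=1}^∞ (1/m) · 1/(e^{s m ℓ} − e^{(s−1) m ℓ}). -/
/-!
Write `a = e^{-sℓ}` and `q = e^{-ℓ}`, so that the factors are `1 - a qᵏ`. Expanding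
`-log (1 - a qᵏ) = ∑_{m ≥ 1} (a qᵏ)ᵐ / m` gives a double series of nonnegative terms. Summed over
`k` first, it is `∑_m aᵐ / (m (1 - qᵐ))`, dominated by the geometric series `∑_m aᵐ / (1 - q)`;
hence the double series converges and may be summed in either order.
-/

open Real

theorem hasSum_pnat_pow_div_neg_log {x : ℝ} (hx : |x| < 1) :
    HasSum (fun m : ℕ+ => x ^ (m : ℕ) / m) (-log (1 - x)) :=
  hasSum_pnat_iff_hasSum_succ (f := fun n : ℕ => x ^ n / n) |>.2 <| by
    simpa using hasSum_pow_div_log_of_abs_lt_one hx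

section QPochhammer

variable {a q : ℝ}

theorem mul_pow_lt_one (ha₀ : 0 ≤ a) (ha₁ : a < 1) (hq₀ : 0 ≤ q) (hq₁ : q ≤ 1) (k : ℕ) :
    a * q ^ k < 1 :=
  (mul_le_of_le_one_right ha₀ (pow_le_one₀ hq₀ hq₁)).trans_lt ha₁

theorem hasSum_pow_mul_pow_div (hq₀ : 0 ≤ q) (hq₁ : q < 1) (m : ℕ+) :
    HasSum (fun k : ℕ => (a * q ^ k) ^ (m : ℕ) / m) (a ^ (m : ℕ) / m * (1 - q ^ (m : ℕ))⁻¹) :=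
  ((hasSum_geometric_of_lt_one (by positivity) (pow_lt_one₀ hq₀ hq₁ m.ne_zero)).mul_left
    (a ^ (m : ℕ) / m)).congr_fun fun k => by ring

theorem summable_pow_div_mul_inv_one_sub_pow (ha₀ : 0 ≤ a) (ha₁ : a < 1) (hq₀ : 0 ≤ q)
    (hq₁ : q < 1) : Summable (fun m : ℕ+ => a ^ (m : ℕ) / m * (1 - q ^ (m : ℕ))⁻¹) := by
  refine Summable.of_nonneg_of_le (fun m => ?_) (fun m => ?_)
    (((summable_geometric_of_lt_one ha₀ ha₁).comp_injective PNat.coe_injective).mul_left (1 - q)⁻¹)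
  · have := pow_lt_one₀ hq₀ hq₁ m.ne_zero
    have : 0 ≤ (1 - q ^ (m : ℕ))⁻¹ := by rw [inv_nonneg]; linarith
    positivity
  · have hqm : q ^ (m : ℕ) ≤ q := pow_le_of_le_one hq₀ hq₁.le m.ne_zero
    rw [mul_comm]
    gcongr
    exact div_le_self (by positivity) (Nat.one_le_cast.2 m.pos)

theorem summable_pow_mul_pow_div (ha₀ : 0 ≤ a) (ha₁ : a < 1) (hq₀ : 0 ≤ q) (hq₁ : q < 1) :
    Summable (fun p : ℕ × ℕ+ => (a * q ^ p.1) ^ (p.2 : ℕ) / p.2) := by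
  refine Summable.prod_symm (f := fun p : ℕ+ × ℕ => (a * q ^ p.2) ^ (p.1 : ℕ) / p.1)
    ((summable_prod_of_nonneg fun _ => by positivity).2
    ⟨fun m => (hasSum_pow_mul_pow_div hq₀ hq₁ m).summable, ?_⟩)
  simpa only [fun m => (hasSum_pow_mul_pow_div (a := a) hq₀ hq₁ m).tsum_eq]
    using summable_pow_div_mul_inv_one_sub_pow ha₀ ha₁ hq₀ hq₁

theorem hasSum_neg_log_one_sub_mul_pow (ha₀ : 0 ≤ a) (ha₁ : a < 1) (hq₀ : 0 ≤ q) (hq₁ : q < 1) :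
    HasSum (fun k : ℕ => -log (1 - a * q ^ k))
      (∑' m : ℕ+, a ^ (m : ℕ) / m * (1 - q ^ (m : ℕ))⁻¹) := by
  obtain ⟨S, hS⟩ := summable_pow_mul_pow_div ha₀ ha₁ hq₀ hq₁
  have hcols := ((Equiv.prodComm ℕ+ ℕ).hasSum_iff.2 hS).prod_fiberwise
    (hasSum_pow_mul_pow_div hq₀ hq₁)
  rw [hcols.tsum_eq]
  refine hS.prod_fiberwise fun k => hasSum_pnat_pow_div_neg_log ?_
  rw [abs_of_nonneg (by positivity)]
  exact mul_pow_lt_one ha₀ ha₁ hq₀ hq₁.le k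

theorem hasProd_one_sub_mul_pow (ha₀ : 0 ≤ a) (ha₁ : a < 1) (hq₀ : 0 ≤ q) (hq₁ : q < 1) :
    HasProd (fun k : ℕ => 1 - a * q ^ k)
      (exp (-∑' m : ℕ+, a ^ (m : ℕ) / m * (1 - q ^ (m : ℕ))⁻¹)) := by
  refine Real.hasProd_of_hasSum_log (fun k => ?_) ?_
  · linarith [mul_pow_lt_one ha₀ ha₁ hq₀ hq₁.le k]
  · simpa using (hasSum_neg_log_one_sub_mul_pow ha₀ ha₁ hq₀ hq₁).neg

end QPochhammer

/-- Single-geodesic building block of the Selberg zeta function: multipliability of the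
factors, summability of the expanded logarithm, and the identity
`-log ∏_k (1 - e^{-(s+k)ℓ}) = ∑_{m ≥ 1} (1/m) / (e^{smℓ} - e^{(s-1)mℓ})`. -/
theorem stmt0 (ℓ s : ℝ) (hℓ : 0 < ℓ) (hs : 0 < s) :
    Multipliable (fun k : ℕ => 1 - Real.exp (-(s + k) * ℓ)) ∧
    Summable (fun m : ℕ+ =>
      (1 / (m : ℝ)) * (Real.exp (s * m * ℓ) - Real.exp ((s - 1) * m * ℓ))⁻¹) ∧
    -Real.log (∏' k : ℕ, (1 - Real.exp (-(s + k) * ℓ))) =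
      ∑' m : ℕ+, (1 / (m : ℝ)) * (Real.exp (s * m * ℓ) - Real.exp ((s - 1) * m * ℓ))⁻¹ := by
  have ha₀ := (exp_pos (-s * ℓ)).le
  have ha₁ : exp (-s * ℓ) < 1 := exp_lt_one_iff.2 (by nlinarith)
  have hq₀ := (exp_pos (-ℓ)).le
  have hq₁ : exp (-ℓ) < 1 := exp_lt_one_iff.2 (by linarith)
  have hfactor : (fun k : ℕ => 1 - exp (-(s + k) * ℓ)) =
      fun k => 1 - exp (-s * ℓ) * exp (-ℓ) ^ k := by
    funext k
    rw [← exp_nat_mul, ← exp_add]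
    ring_nf
  have hterm : (fun m : ℕ+ => 1 / (m : ℝ) * (exp (s * m * ℓ) - exp ((s - 1) * m * ℓ))⁻¹) =
      fun m : ℕ+ => exp (-s * ℓ) ^ (m : ℕ) / m * (1 - exp (-ℓ) ^ (m : ℕ))⁻¹ := by
    funext m
    have hdiff : exp (s * m * ℓ) - exp ((s - 1) * m * ℓ) =
        exp (s * m * ℓ) * (1 - exp (-(m * ℓ))) := by
      rw [mul_sub, ← exp_add]
      ring_nf
    rw [hdiff, ← exp_nat_mul, ← exp_nat_mul, mul_inv, ← exp_neg]
    ring_nf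
  have hprod := hasProd_one_sub_mul_pow ha₀ ha₁ hq₀ hq₁
  rw [hfactor, hterm]
  exact ⟨hprod.multipliable, summable_pow_div_mul_inv_one_sub_pow ha₀ ha₁ hq₀ hq₁,
    by rw [hprod.tprod_eq, log_exp, neg_neg]⟩
end

section
/- Let ι be a type, let ℓ : ι → ℝ be a family of reals with ℓ i ≥ c for all i, for some constant c > 0, let s > 0 be real, and suppose the family i ↦ exp(−s·ℓ i) is summable. Then the family (i,k) ∈ ι × ℕ ↦ 1 − exp(−(s+k)·ℓ i) is multipliable, each factor lies in (0,1), and the product ∏_{(i,k)} (1 − e^{−(s+k)ℓ_i}) is strictly positive. -/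
/-!
Since `ℓ i ≥ c`, we have `e^{-(s+k)ℓ i} ≤ e^{-s ℓ i} · (e^{-c})^k`, so the terms `e^{-(s+k)ℓ i}`
are summable over `ι × ℕ`. Then `log (1 - e^{-(s+k)ℓ i})` is summable too, and the product is the
exponential of that sum, hence positive.
-/

open Real

namespace Real

variable {ι : Type*} {a : ι → ℝ}

theorem summable_log_one_sub_of_summable (ha : Summable a) :
    Summable fun i => log (1 - a i) := by
  simpa only [sub_eq_add_neg] using summable_log_one_add_of_summable ha.neg

theorem multipliable_one_sub_of_summable (ha₁ : ∀ i, a i < 1) (ha : Summable a) :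
    Multipliable fun i => 1 - a i :=
  multipliable_of_summable_log (fun i => sub_pos.2 (ha₁ i)) (summable_log_one_sub_of_summable ha)

theorem tprod_one_sub_pos_of_summable (ha₁ : ∀ i, a i < 1) (ha : Summable a) :
    0 < ∏' i, (1 - a i) := by
  rw [← rexp_tsum_eq_tprod (fun i => sub_pos.2 (ha₁ i)) (summable_log_one_sub_of_summable ha)]
  exact exp_pos _

end Real

theorem summable_exp_neg_add_nat_mul {ι : Type*} {ℓ : ι → ℝ} {c s : ℝ} (hc : 0 < c)
    (hℓ : ∀ i, c ≤ ℓ i) (hsum : Summable fun i => exp (-s * ℓ i)) :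
    Summable fun p : ι × ℕ => exp (-(s + p.2) * ℓ p.1) := by
  have hgeom : Summable fun k : ℕ => exp (-c) ^ k :=
    summable_geometric_of_lt_one (exp_pos _).le (exp_lt_one_iff.2 (neg_neg_of_pos hc))
  refine Summable.of_nonneg_of_le (fun _ => (exp_pos _).le) (fun ⟨i, k⟩ => ?_)
    (hsum.mul_of_nonneg hgeom (fun _ => (exp_pos _).le) (fun _ => by positivity))
  rw [← exp_nat_mul, ← exp_add, exp_le_exp]
  nlinarith [hℓ i, (k.cast_nonneg : (0 : ℝ) ≤ k)]

/-- Convergence of the Selberg zeta product: if the lengths `ℓ i` are bounded below by `c > 0`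
and `i ↦ e^{-s ℓ i}` is summable, then the family `(i,k) ↦ 1 - e^{-(s+k) ℓ i}` is multipliable,
each factor lies in `(0,1)`, and the product is strictly positive. -/
theorem stmt1 {ι : Type*} (ℓ : ι → ℝ) (c : ℝ) (hc : 0 < c) (hℓ : ∀ i, c ≤ ℓ i)
    (s : ℝ) (hs : 0 < s) (hsum : Summable fun i => Real.exp (-s * ℓ i)) :
    Multipliable (fun p : ι × ℕ => 1 - Real.exp (-(s + p.2) * ℓ p.1)) ∧
    (∀ p : ι × ℕ, 1 - Real.exp (-(s + p.2) * ℓ p.1) ∈ Set.Ioo (0 : ℝ) 1) ∧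
    0 < ∏' p : ι × ℕ, (1 - Real.exp (-(s + p.2) * ℓ p.1)) := by
  have hlt : ∀ p : ι × ℕ, exp (-(s + p.2) * ℓ p.1) < 1 := fun ⟨i, k⟩ => by
    have : 0 < (s + k) * ℓ i := mul_pos (by positivity) (hc.trans_le (hℓ i))
    rw [exp_lt_one_iff]
    linarith
  have hsum' := summable_exp_neg_add_nat_mul hc hℓ hsum
  refine ⟨multipliable_one_sub_of_summable hlt hsum', fun p => ⟨sub_pos.2 (hlt p), ?_⟩,
    tprod_one_sub_pos_of_summable hlt hsum'⟩
  linarith [exp_pos (-(s + p.2) * ℓ p.1)]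
end

section
/- Let ι be a type, let ℓ : ι → ℝ be a family of reals with ℓ i ≥ c for all i, for some constant c > 0, let κ ≥ −1/4 be real, set s = 1/2 + √(1/4 + κ), and suppose s > 0 and the family i ↦ exp(−s·ℓ i) is summable. Then the double family (i,m) ∈ ι × ℕ≥1 ↦ (1/m) · e^{(1/2 − √(1/4+κ)) m ℓ_i} / (e^{m ℓ_i} − 1) is summable. -/
open Real

set_option maxHeartbeats 1000000 in
/-- Finiteness of the total mass of the Brownian loop measure with killing rate `κ` in all
essential homotopy classes: summability of
`(i,m) ↦ (1/m) e^{(1/2 - √(1/4+κ)) m ℓ_i} / (e^{m ℓ_i} - 1)`. -/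
theorem stmt3 {ι : Type*} (ℓ : ι → ℝ) (c : ℝ) (hc : 0 < c) (hℓ : ∀ i, c ≤ ℓ i)
    (κ : ℝ) (hκ : -(1 / 4) ≤ κ) (s : ℝ) (hsdef : s = 1 / 2 + Real.sqrt (1 / 4 + κ))
    (hs : 0 < s) (hsum : Summable fun i => Real.exp (-s * ℓ i)) :
    Summable (fun p : ι × ℕ+ =>
      (1 / (p.2 : ℝ)) * Real.exp ((1 / 2 - Real.sqrt (1 / 4 + κ)) * p.2 * ℓ p.1) /
        (Real.exp (p.2 * ℓ p.1) - 1)) := by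
  have hts : Real.sqrt (1 / 4 + κ) = s - 1 / 2 := by rw [hsdef]; ring
  have hec : Real.exp (-c) < 1 := by rw [Real.exp_lt_one_iff]; linarith
  set D : ℝ := 1 - Real.exp (-c) with hD
  have hD0 : 0 < D := by simp only [hD]; linarith
  set q : ℝ := Real.exp (-(s * c)) with hq
  have hq0 : 0 ≤ q := (Real.exp_pos _).le
  have hq1 : q < 1 := by rw [hq, Real.exp_lt_one_iff]; nlinarith
  have hSg : Summable (fun m : ℕ+ => q ^ ((m : ℕ) - 1)) := by
    have h := summable_geometric_of_lt_one hq0 hq1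
    have hinj : Function.Injective (fun m : ℕ+ => (m : ℕ) - 1) := by
      intro a b hab
      simp only at hab
      have ha := a.pos; have hb := b.pos
      exact PNat.coe_injective (by omega)
    exact h.comp_injective hinj
  have hSf : Summable (fun i => (1 / D) * Real.exp (-s * ℓ i)) := hsum.mul_left _
  have hprod : Summable (fun p : ι × ℕ+ =>
      ((1 / D) * Real.exp (-s * ℓ p.1)) * q ^ ((p.2 : ℕ) - 1)) :=
    hSf.mul_of_nonneg hSg (fun i => by positivity) (fun m => by positivity)
  apply Summable.of_nonneg_of_le _ _ hprod
  · intro p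
    have hn1 : (1 : ℝ) ≤ (p.2 : ℝ) := by
      have h := p.2.pos; exact_mod_cast h
    have hL : c ≤ ℓ p.1 := hℓ _
    have hx : 0 < (p.2 : ℝ) * ℓ p.1 := by nlinarith
    have h1 : 0 < Real.exp ((p.2 : ℝ) * ℓ p.1) - 1 := by
      nlinarith [Real.add_one_le_exp ((p.2 : ℝ) * ℓ p.1)]
    have h2 : 0 ≤ (1 / (p.2 : ℝ)) *
        Real.exp ((1 / 2 - Real.sqrt (1 / 4 + κ)) * p.2 * ℓ p.1) := by positivity
    exact div_nonneg h2 h1.le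
  · intro p
    obtain ⟨i, m⟩ := p
    set n : ℝ := (m : ℝ) with hn
    have hn1 : (1 : ℝ) ≤ n := by
      have h := m.pos; rw [hn]; exact_mod_cast h
    have hn0 : 0 < n := by linarith
    have hL : c ≤ ℓ i := hℓ _
    have hL0 : 0 < ℓ i := lt_of_lt_of_le hc hL
    have hx : c ≤ n * ℓ i := le_trans hL (by nlinarith)
    have hx0 : 0 < n * ℓ i := by nlinarith
    set E : ℝ := Real.exp (n * ℓ i) with hE
    have hE0 : 0 < E := Real.exp_pos _
    have hE1 : (1 : ℝ) ≤ Real.exp (-c) * E := by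
      rw [hE, ← Real.exp_add]
      exact Real.one_le_exp (by linarith)
    have hden : D * E ≤ E - 1 := by simp only [hD]; nlinarith
    have hden0 : 0 < D * E := by positivity
    have h1lt : 0 < E - 1 := lt_of_lt_of_le hden0 hden
    -- numerator rewriting
    have hnum : Real.exp ((1 / 2 - Real.sqrt (1 / 4 + κ)) * m * ℓ i)
        = Real.exp (-(s * (n * ℓ i))) * E := by
      rw [hts, hE, ← Real.exp_add]
      congr 1
      ring
    -- cast of (m:ℕ)-1
    have hcast : (((m : ℕ) - 1 : ℕ) : ℝ) = n - 1 := by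
      have := m.one_le
      push_cast [Nat.cast_sub this]
      simp [hn]
    have hqpow : q ^ ((m : ℕ) - 1) = Real.exp (-(s * c) * (n - 1)) := by
      rw [hq, ← Real.exp_nat_mul, hcast, mul_comm]
    calc (1 / n) * Real.exp ((1 / 2 - Real.sqrt (1 / 4 + κ)) * m * ℓ i) / (E - 1)
        ≤ (1 / n) * Real.exp ((1 / 2 - Real.sqrt (1 / 4 + κ)) * m * ℓ i) / (D * E) := by
          apply div_le_div_of_nonneg_left (by positivity) hden0 hden
      _ = (1 / n) * Real.exp (-(s * (n * ℓ i))) / D := by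
          rw [hnum]; field_simp
      _ ≤ Real.exp (-(s * (n * ℓ i))) / D := by
          apply div_le_div_of_nonneg_right ?_ hD0.le
          have h : 1 / n ≤ 1 := by rw [div_le_one hn0]; exact hn1
          nlinarith [Real.exp_pos (-(s * (n * ℓ i)))]
      _ ≤ (1 / D) * Real.exp (-s * ℓ i) * q ^ ((m : ℕ) - 1) := by
          rw [hqpow]
          have hsplit : Real.exp (-(s * (n * ℓ i)))
              = Real.exp (-s * ℓ i) * Real.exp (-(s * ℓ i) * (n - 1)) := by
            rw [← Real.exp_add]; congr 1; ring
          have hle : Real.exp (-(s * ℓ i) * (n - 1)) ≤ Real.exp (-(s * c) * (n - 1)) := by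
            apply Real.exp_le_exp.mpr
            nlinarith [mul_le_mul_of_nonneg_left hL
              (mul_nonneg hs.le (by linarith : (0:ℝ) ≤ n - 1))]
          rw [hsplit]
          rw [div_eq_mul_one_div, mul_comm _ (1/D), mul_assoc]
          apply mul_le_mul_of_nonneg_left ?_ (by positivity)
          exact mul_le_mul_of_nonneg_left hle (Real.exp_pos _).le
end

section
/- Let t > 0 and ℓ > 0 be reals, and for θ ∈ ℝ set q(θ) = 1 + 2·sinh(ℓ/2)²·(1 + θ²). Then ∫_{θ ∈ ℝ} ∫_{r = arcosh(q(θ))}^{∞} r·e^{−r²/(4t)}·(cosh r − q(θ))^{−1/2} dr dθ = √2·π·t·e^{−ℓ²/(4t)} / sinh(ℓ/2). -/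
/-!
After swapping the two integrations, fix `r`. Writing `q θ = cosh ℓ + b θ²` with
`b = 2 sinh² (ℓ/2)`, the condition `arcosh (q θ) < r` says `ℓ < r` and `|θ| < c`, where
`b c² = cosh r - cosh ℓ`, and then `cosh r - q θ = b (c² - θ²)`. The substitution `θ = c sin u`
shows `∫_{-c}^{c} (c² - θ²)^{-1/2} dθ = π` whatever `c` is, so the `θ`-integral is `π / √b` times
the `r`-integrand on `(ℓ, ∞)`, and `∫_ℓ^∞ r e^{-r²/(4t)} dr = 2t e^{-ℓ²/(4t)}`.
-/

open Real MeasureTheory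

/-- The inverse of `cosh : [0,∞) → [1,∞)`. -/
noncomputable def arcosh (x : ℝ) : ℝ := Real.log (x + Real.sqrt (x ^ 2 - 1))

open Set Filter Topology

lemma arcosh_eq_real_arcosh : _root_.arcosh = Real.arcosh := rfl

lemma arcosh_lt_iff_lt_cosh {x r : ℝ} (hx : 1 ≤ x) :
    Real.arcosh x < r ↔ 0 < r ∧ x < cosh r := by
  constructor
  · intro h
    have hr : 0 < r := (arcosh_nonneg hx).trans_lt h
    refine ⟨hr, ?_⟩
    rw [← cosh_arcosh hx]
    exact cosh_strictMonoOn (arcosh_nonneg hx) hr.le h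
  · rintro ⟨hr, h⟩
    rw [← cosh_arcosh hx] at h
    exact (cosh_strictMonoOn.lt_iff_lt (arcosh_nonneg hx) hr.le).mp h

lemma sin_image_Ioo : sin '' Ioo (-(π / 2)) (π / 2) = Ioo (-1) 1 := by
  ext x
  constructor
  · rintro ⟨u, ⟨hu₁, hu₂⟩, rfl⟩
    constructor
    · simpa using sin_lt_sin_of_lt_of_le_pi_div_two le_rfl hu₂.le hu₁
    · simpa using sin_lt_sin_of_lt_of_le_pi_div_two hu₁.le le_rfl hu₂
  · rintro ⟨hx₁, hx₂⟩
    exact ⟨arcsin x, ⟨neg_pi_div_two_lt_arcsin.mpr hx₁, arcsin_lt_pi_div_two.mpr hx₂⟩,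
      sin_arcsin hx₁.le hx₂.le⟩

lemma hasDerivWithinAt_mul_sin (c : ℝ) (s : Set ℝ) (u : ℝ) :
    HasDerivWithinAt (c * sin ·) (c * cos u) s u :=
  ((hasDerivAt_sin u).const_mul c).hasDerivWithinAt

section Chord

variable {c : ℝ} (hc : 0 < c)
include hc

lemma mul_sin_image_Ioo : (c * sin ·) '' Ioo (-(π / 2)) (π / 2) = Ioo (-c) c := by
  rw [← image_image (c * ·), sin_image_Ioo, image_mul_left_Ioo hc, mul_neg_one, mul_one]

lemma injOn_mul_sin : InjOn (c * sin ·) (Ioo (-(π / 2)) (π / 2)) :=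
  (mul_right_injective₀ hc.ne').comp_injOn (injOn_sin.mono Ioo_subset_Icc_self)

lemma abs_mul_cos_smul_inv_sqrt_eqOn :
    EqOn (fun u => |c * cos u| • (√(c ^ 2 - (c * sin u) ^ 2))⁻¹) 1 (Ioo (-(π / 2)) (π / 2)) := by
  intro u hu
  have hcos : 0 < cos u := cos_pos_of_mem_Ioo hu
  have h : c ^ 2 - (c * sin u) ^ 2 = (c * cos u) ^ 2 := by
    linear_combination -c ^ 2 * sin_sq_add_cos_sq u
  show |c * cos u| * (√(c ^ 2 - (c * sin u) ^ 2))⁻¹ = 1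
  rw [h, sqrt_sq (by positivity), abs_of_pos (by positivity),
    mul_inv_cancel₀ (by positivity)]

lemma integrableOn_inv_sqrt_sq_sub_sq :
    IntegrableOn (fun θ => (√(c ^ 2 - θ ^ 2))⁻¹) (Ioo (-c) c) := by
  rw [← mul_sin_image_Ioo hc, integrableOn_image_iff_integrableOn_abs_deriv_smul
    measurableSet_Ioo (fun u _ => hasDerivWithinAt_mul_sin c _ u) (injOn_mul_sin hc)]
  exact (integrableOn_const measure_Ioo_lt_top.ne).congr_fun
    (abs_mul_cos_smul_inv_sqrt_eqOn hc).symm measurableSet_Ioo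

lemma integral_inv_sqrt_sq_sub_sq : ∫ θ in Ioo (-c) c, (√(c ^ 2 - θ ^ 2))⁻¹ = π := by
  rw [← mul_sin_image_Ioo hc, integral_image_eq_integral_abs_deriv_smul measurableSet_Ioo
    (fun u _ => hasDerivWithinAt_mul_sin c _ u) (injOn_mul_sin hc),
    setIntegral_congr_fun measurableSet_Ioo (abs_mul_cos_smul_inv_sqrt_eqOn hc)]
  simp [Real.volume_real_Ioo, pi_pos.le]

end Chord

section Gaussian

variable {t : ℝ} (ht : 0 < t)
include ht

lemma integrableOn_Ioi_mul_exp_neg_sq_div (a : ℝ) :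
    IntegrableOn (fun r => r * exp (-r ^ 2 / (4 * t))) (Ioi a) := by
  have h := (integrable_mul_exp_neg_mul_sq (inv_pos.mpr (mul_pos four_pos ht))).integrableOn
    (s := Ioi a)
  convert h using 4 with r
  ring

lemma integral_Ioi_mul_exp_neg_sq_div (a : ℝ) :
    ∫ r in Ioi a, r * exp (-r ^ 2 / (4 * t)) = 2 * t * exp (-a ^ 2 / (4 * t)) := by
  have hderiv (r : ℝ) : HasDerivAt (fun r => -(2 * t) * exp (-r ^ 2 / (4 * t)))
      (r * exp (-r ^ 2 / (4 * t))) r := by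
    have hquad : HasDerivAt (fun r => -r ^ 2 / (4 * t)) (-(2 * r) / (4 * t)) r := by
      simpa using (hasDerivAt_pow 2 r).neg.div_const (4 * t)
    refine (hquad.exp.const_mul _).congr_deriv ?_
    field_simp
    ring
  have hlim : Tendsto (fun r => -(2 * t) * exp (-r ^ 2 / (4 * t))) atTop (𝓝 0) := by
    have : Tendsto (fun r : ℝ => -r ^ 2 / (4 * t)) atTop atBot :=
      (tendsto_neg_atTop_atBot.comp (tendsto_pow_atTop two_ne_zero)).atBot_div_const
        (by positivity)
    simpa using (tendsto_exp_atBot.comp this).const_mul (-(2 * t))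
  rw [integral_Ioi_of_hasDerivAt_of_tendsto' (fun r _ => hderiv r)
    (integrableOn_Ioi_mul_exp_neg_sq_div ht a) hlim]
  ring

end Gaussian

section Abel

variable {ℓ b : ℝ}

noncomputable def abelIntegrand (f : ℝ → ℝ) (ℓ b θ r : ℝ) : ℝ :=
  (Ioi (Real.arcosh (cosh ℓ + b * θ ^ 2))).indicator
    (fun r => f r / √(cosh r - (cosh ℓ + b * θ ^ 2))) r

lemma one_le_cosh_add_mul_sq (hb : 0 ≤ b) (θ : ℝ) : 1 ≤ cosh ℓ + b * θ ^ 2 := by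
  linarith [one_le_cosh ℓ, mul_nonneg hb (sq_nonneg θ)]

lemma arcosh_cosh_add_mul_sq_lt_iff (hℓ : 0 ≤ ℓ) (hb : 0 < b) (θ r : ℝ) :
    Real.arcosh (cosh ℓ + b * θ ^ 2) < r ↔ ℓ < r ∧ b * θ ^ 2 < cosh r - cosh ℓ := by
  have hθ : 0 ≤ b * θ ^ 2 := by positivity
  rw [arcosh_lt_iff_lt_cosh (one_le_cosh_add_mul_sq hb.le θ)]
  constructor
  · rintro ⟨hr, h⟩
    have hcosh : cosh ℓ < cosh r := by linarith
    rw [cosh_lt_cosh, abs_of_nonneg hℓ, abs_of_pos hr] at hcosh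
    exact ⟨hcosh, by linarith⟩
  · rintro ⟨hr, h⟩
    exact ⟨hℓ.trans_lt hr, by linarith⟩

lemma abelIntegrand_of_le (f : ℝ → ℝ) (hℓ : 0 ≤ ℓ) (hb : 0 < b) (θ : ℝ) {r : ℝ}
    (hr : r ≤ ℓ) :
    abelIntegrand f ℓ b θ r = 0 :=
  indicator_of_notMem (fun h => hr.not_gt ((arcosh_cosh_add_mul_sq_lt_iff hℓ hb θ r).mp h).1) _

lemma exists_pos_mul_sq_eq {A : ℝ} (hb : 0 < b) (hA : 0 < A) : ∃ c, 0 < c ∧ b * c ^ 2 = A :=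
  ⟨√(A / b), sqrt_pos.mpr (div_pos hA hb), by rw [sq_sqrt (div_pos hA hb).le]; field_simp⟩

lemma abelIntegrand_section_eq (f : ℝ → ℝ) (hℓ : 0 ≤ ℓ) (hb : 0 < b) {r c : ℝ} (hr : ℓ < r)
    (hc₀ : 0 ≤ c) (hc : b * c ^ 2 = cosh r - cosh ℓ) :
    (abelIntegrand f ℓ b · r) =
      (Ioo (-c) c).indicator (fun θ => f r / √b * (√(c ^ 2 - θ ^ 2))⁻¹) := by
  ext θ
  have hmem : Real.arcosh (cosh ℓ + b * θ ^ 2) < r ↔ θ ∈ Ioo (-c) c := by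
    rw [arcosh_cosh_add_mul_sq_lt_iff hℓ hb, ← hc, mul_lt_mul_iff_right₀ hb, sq_lt_sq,
      abs_of_nonneg hc₀, mem_Ioo, ← abs_lt]
    exact and_iff_right hr
  simp only [abelIntegrand, indicator, mem_Ioi, hmem]
  split_ifs
  · rw [show cosh r - (cosh ℓ + b * θ ^ 2) = b * (c ^ 2 - θ ^ 2) by linear_combination -hc,
      sqrt_mul hb.le]
    ring
  · rfl

lemma integrable_abelIntegrand_section (f : ℝ → ℝ) (hℓ : 0 ≤ ℓ) (hb : 0 < b) (r : ℝ) :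
    Integrable (abelIntegrand f ℓ b · r) := by
  rcases lt_or_ge ℓ r with hr | hr
  · obtain ⟨c, hc₀, hc⟩ := exists_pos_mul_sq_eq hb
      (sub_pos.mpr (cosh_strictMonoOn hℓ (hℓ.trans hr.le) hr))
    rw [abelIntegrand_section_eq f hℓ hb hr hc₀.le hc, integrable_indicator_iff measurableSet_Ioo]
    exact (integrableOn_inv_sqrt_sq_sub_sq hc₀).const_mul _
  · simp only [abelIntegrand_of_le f hℓ hb _ hr]
    exact integrable_zero _ _ _

lemma integral_abelIntegrand_section (f : ℝ → ℝ) (hℓ : 0 ≤ ℓ) (hb : 0 < b) (r : ℝ) :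
    ∫ θ, abelIntegrand f ℓ b θ r = (Ioi ℓ).indicator (fun r => π / √b * f r) r := by
  rcases lt_or_ge ℓ r with hr | hr
  · obtain ⟨c, hc₀, hc⟩ := exists_pos_mul_sq_eq hb
      (sub_pos.mpr (cosh_strictMonoOn hℓ (hℓ.trans hr.le) hr))
    rw [abelIntegrand_section_eq f hℓ hb hr hc₀.le hc, integral_indicator measurableSet_Ioo,
      integral_const_mul, integral_inv_sqrt_sq_sub_sq hc₀, indicator_of_mem (mem_Ioi.mpr hr)]
    ring
  · simp [abelIntegrand_of_le f hℓ hb _ hr, hr]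

lemma norm_abelIntegrand (f : ℝ → ℝ) (θ r : ℝ) :
    ‖abelIntegrand f ℓ b θ r‖ = abelIntegrand (‖f ·‖) ℓ b θ r := by
  simp only [abelIntegrand, norm_indicator_eq_indicator_norm, norm_div,
    norm_of_nonneg (sqrt_nonneg _)]

lemma aestronglyMeasurable_abelIntegrand {f : ℝ → ℝ} (hℓ : 0 ≤ ℓ) (hb : 0 < b)
    (hf : IntegrableOn f (Ioi ℓ)) :
    AEStronglyMeasurable (Function.uncurry (abelIntegrand f ℓ b)) (volume.prod volume) := by
  set S := {p : ℝ × ℝ | Real.arcosh (cosh ℓ + b * p.1 ^ 2) < p.2}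
  have hS : MeasurableSet S := measurableSet_lt
    ((continuousOn_arcosh.comp_continuous (f := fun θ => cosh ℓ + b * θ ^ 2) (by fun_prop)
      fun θ => one_le_cosh_add_mul_sq hb.le θ).measurable.comp measurable_fst)
    measurable_snd
  have hsub : S ⊆ univ ×ˢ Ioi ℓ := fun p hp =>
    ⟨mem_univ _, ((arcosh_cosh_add_mul_sq_lt_iff hℓ hb p.1 p.2).mp hp).1⟩
  have hsplit : Function.uncurry (abelIntegrand f ℓ b) =
      S.indicator (fun p => f p.2 / √(cosh p.2 - (cosh ℓ + b * p.1 ^ 2))) := rfl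
  rw [hsplit, aestronglyMeasurable_indicator_iff hS]
  refine AEStronglyMeasurable.mono_measure ?_ (Measure.restrict_mono hsub le_rfl)
  rw [← Measure.prod_restrict, Measure.restrict_univ]
  have hsqrt : Continuous fun p : ℝ × ℝ => √(cosh p.2 - (cosh ℓ + b * p.1 ^ 2)) := by fun_prop
  exact hf.aestronglyMeasurable.comp_snd.div₀ hsqrt.aestronglyMeasurable

theorem integral_integral_abelIntegrand {f : ℝ → ℝ} (hℓ : 0 ≤ ℓ) (hb : 0 < b)
    (hf : IntegrableOn f (Ioi ℓ)) :
    ∫ θ, ∫ r in Ioi (Real.arcosh (cosh ℓ + b * θ ^ 2)), f r / √(cosh r - (cosh ℓ + b * θ ^ 2)) =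
      π / √b * ∫ r in Ioi ℓ, f r := by
  have hint : Integrable (Function.uncurry (abelIntegrand f ℓ b)) (volume.prod volume) := by
    refine (integrable_prod_iff' (aestronglyMeasurable_abelIntegrand hℓ hb hf)).mpr
      ⟨.of_forall (integrable_abelIntegrand_section f hℓ hb), ?_⟩
    simp only [Function.uncurry_apply_pair, norm_abelIntegrand,
      integral_abelIntegrand_section _ hℓ hb]
    exact (integrable_indicator_iff measurableSet_Ioi).mpr (hf.norm.const_mul _)
  calc _ = ∫ θ, ∫ r, abelIntegrand f ℓ b θ r := by
        simp only [abelIntegrand, integral_indicator measurableSet_Ioi]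
    _ = ∫ r, ∫ θ, abelIntegrand f ℓ b θ r := integral_integral_swap hint
    _ = π / √b * ∫ r in Ioi ℓ, f r := by
        simp only [integral_abelIntegrand_section f hℓ hb, integral_indicator measurableSet_Ioi,
          integral_const_mul]

end Abel

lemma cosh_eq_one_add_two_mul_sinh_half_sq (x : ℝ) : cosh x = 1 + 2 * sinh (x / 2) ^ 2 := by
  have h := cosh_two_mul (x / 2)
  rw [mul_div_cancel₀ x two_ne_zero] at h
  rw [h, cosh_sq]
  ring

/-- The Abel-transform computation: with `q θ = 1 + 2 sinh(ℓ/2)² (1 + θ²)`,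
`∫_ℝ ∫_{arcosh (q θ)}^∞ r e^{-r²/(4t)} (cosh r - q θ)^{-1/2} dr dθ
  = √2 π t e^{-ℓ²/(4t)} / sinh(ℓ/2)`. -/
theorem stmt5 (t ℓ : ℝ) (ht : 0 < t) (hℓ : 0 < ℓ) :
    (∫ θ : ℝ, ∫ r in Set.Ioi (_root_.arcosh (1 + 2 * Real.sinh (ℓ / 2) ^ 2 * (1 + θ ^ 2))),
        r * Real.exp (-r ^ 2 / (4 * t)) /
          Real.sqrt (Real.cosh r - (1 + 2 * Real.sinh (ℓ / 2) ^ 2 * (1 + θ ^ 2)))) =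
      Real.sqrt 2 * π * t * Real.exp (-ℓ ^ 2 / (4 * t)) / Real.sinh (ℓ / 2) := by
  have hs : 0 < sinh (ℓ / 2) := sinh_pos_iff.mpr (half_pos hℓ)
  have hq (θ : ℝ) :
      1 + 2 * sinh (ℓ / 2) ^ 2 * (1 + θ ^ 2) = cosh ℓ + 2 * sinh (ℓ / 2) ^ 2 * θ ^ 2 := by
    rw [cosh_eq_one_add_two_mul_sinh_half_sq]
    ring
  simp_rw [arcosh_eq_real_arcosh, hq]
  rw [integral_integral_abelIntegrand hℓ.le (by positivity)
      (integrableOn_Ioi_mul_exp_neg_sq_div ht ℓ), integral_Ioi_mul_exp_neg_sq_div ht,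
    sqrt_mul zero_le_two, sqrt_sq hs.le]
  field_simp
  rw [sq_sqrt zero_le_two]
end

section
/- For every real L > 0 and every real κ ≥ −1/4, ∫_0^∞ (1/t) · (e^{−t/4}/√(4πt)) · (L/(2·sinh(L/2))) · e^{−L²/(4t)} · e^{−κt} dt = e^{(1/2 − √(1/4+κ))·L} / (e^{L} − 1). -/
/-!
Substituting `t = s²` and completing the square, `a t + b / t = (√a s - √b / s)² + 2 √(ab)`,
reduces `∫₀^∞ t^(-3/2) e^(-a t - b / t) dt` to `∫₀^∞ (√b / s²) e^(-(√a s - √b / s)²) ds`.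
The Cauchy–Schlömilch trick evaluates the latter: `u = √a s - √b / s` maps `(0, ∞)` onto `ℝ`
with Jacobian `√a + √b / s²`, and the involution `s ↦ √b / (√a s)` exchanges the two terms of
the Jacobian, so the integral is half the Gaussian integral, `√π / 2`. With `a = 1/4 + κ` and
`b = L² / 4` this gives `e^(-√(1/4 + κ) L) / (2 sinh (L / 2))`.
-/

open Real MeasureTheory Set

theorem integral_Ioi_div_sq_smul_comp_div {E : Type*} [NormedAddCommGroup E] [NormedSpace ℝ E]
    {k : ℝ} (hk : 0 < k) (g : ℝ → E) :
    ∫ s in Ioi 0, (k / s ^ 2) • g (k / s) = ∫ x in Ioi 0, g x := by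
  have hderiv : ∀ s ∈ Ioi (0 : ℝ), HasDerivWithinAt (fun s => k / s) (-(k / s ^ 2)) (Ioi 0) s :=
    fun s hs => by
      simpa [div_eq_mul_inv] using ((hasDerivAt_inv hs.ne').const_mul k).hasDerivWithinAt
  have hinj : InjOn (fun s => k / s) (Ioi 0) := fun x hx y hy h =>
    inv_injective (mul_left_cancel₀ hk.ne' (by simpa [div_eq_mul_inv] using h))
  have himage : (fun s => k / s) '' Ioi 0 = Ioi (0 : ℝ) := by
    refine (image_subset_iff.2 fun s hs => div_pos hk hs).antisymm fun x hx => ?_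
    exact ⟨k / x, div_pos hk hx, div_div_cancel₀ hk.ne'⟩
  have hsubst := integral_image_eq_integral_abs_deriv_smul measurableSet_Ioi hderiv hinj g
  rw [himage] at hsubst
  rw [hsubst]
  refine setIntegral_congr_fun measurableSet_Ioi fun s hs => ?_
  rw [abs_neg, abs_of_pos (div_pos hk (pow_pos hs 2))]

theorem hasDerivAt_mul_sub_div (c d : ℝ) {s : ℝ} (hs : s ≠ 0) :
    HasDerivAt (fun s => c * s - d / s) (c + d / s ^ 2) s := by
  refine (((hasDerivAt_id s).const_mul c).sub ((hasDerivAt_inv hs).const_mul d)).congr_deriv ?_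
  ring

theorem strictMonoOn_mul_sub_div {c d : ℝ} (hc : 0 ≤ c) (hd : 0 < d) :
    StrictMonoOn (fun s => c * s - d / s) (Ioi 0) := fun x hx y _ hxy => by
  have hinv := div_lt_div_of_pos_left hd hx hxy
  have hlin := mul_le_mul_of_nonneg_left hxy.le hc
  simp only
  linarith

theorem image_mul_sub_div_Ioi {c d : ℝ} (hc : 0 < c) (hd : 0 < d) :
    (fun s => c * s - d / s) '' Ioi 0 = univ := by
  refine eq_univ_of_forall fun y => ?_
  -- the positive root of `c s² - y s - d = 0`
  set D := √(y ^ 2 + 4 * c * d) with hD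
  have hD_sq : D ^ 2 = y ^ 2 + 4 * c * d := sq_sqrt (by positivity)
  have hroot : |y| < D := by
    rw [← sqrt_sq_eq_abs]
    exact sqrt_lt_sqrt (sq_nonneg y) (by nlinarith [mul_pos hc hd])
  have hpos : 0 < y + D := by linarith [neg_abs_le y]
  refine ⟨(y + D) / (2 * c), div_pos hpos (by positivity), ?_⟩
  field_simp
  nlinarith

theorem Function.Even.integral_Ioi {f : ℝ → ℝ} (hf : f.Even) :
    ∫ x in Ioi 0, f x = (∫ x, f x) / 2 := by
  have h := integral_comp_abs (f := f)
  have habs (x : ℝ) : f |x| = f x := by rcases abs_choice x with h | h <;> simp [h, hf x]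
  simp only [habs] at h
  linarith

/-- The Cauchy–Schlömilch transformation. -/
theorem integral_Ioi_div_sq_mul_comp_mul_sub_div {f : ℝ → ℝ} (hf : f.Even) (hfi : Integrable f)
    {c d : ℝ} (hc : 0 ≤ c) (hd : 0 < d) :
    ∫ s in Ioi 0, d / s ^ 2 * f (c * s - d / s) = (∫ u, f u) / 2 := by
  rcases hc.eq_or_lt with rfl | hc
  · simp only [zero_mul, zero_sub, show ∀ x, f (-x) = f x from hf]
    exact (integral_Ioi_div_sq_smul_comp_div hd f).trans hf.integral_Ioi
  set v : ℝ → ℝ := fun s => c * s - d / s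
  have hderiv : ∀ s ∈ Ioi (0 : ℝ), HasDerivWithinAt v (c + d / s ^ 2) (Ioi 0) s :=
    fun s hs => (hasDerivAt_mul_sub_div c d hs.ne').hasDerivWithinAt
  have hinj := (strictMonoOn_mul_sub_div hc.le hd).injOn
  have habs : ∀ s ∈ Ioi (0 : ℝ), |c + d / s ^ 2| • f (v s) = (c + d / s ^ 2) * f (v s) :=
    fun s hs => by rw [abs_of_pos (by positivity), smul_eq_mul]
  have htotal_int : IntegrableOn (fun s => (c + d / s ^ 2) * f (v s)) (Ioi 0) := by
    refine (integrableOn_congr_fun habs measurableSet_Ioi).1 ?_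
    rw [← integrableOn_image_iff_integrableOn_abs_deriv_smul measurableSet_Ioi hderiv hinj,
      image_mul_sub_div_Ioi hc hd]
    exact hfi.integrableOn
  have htotal : ∫ s in Ioi 0, (c + d / s ^ 2) * f (v s) = ∫ u, f u := by
    rw [← setIntegral_congr_fun measurableSet_Ioi habs,
      ← integral_image_eq_integral_abs_deriv_smul measurableSet_Ioi hderiv hinj,
      image_mul_sub_div_Ioi hc hd, setIntegral_univ]
  -- `d / s²` is the fraction `d / (c s² + d) ∈ (0, 1]` of the Jacobian `c + d / s²`
  have hint : IntegrableOn (fun s => d / s ^ 2 * f (v s)) (Ioi 0) := by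
    refine (integrableOn_congr_fun (fun s (hs : 0 < s) => ?_) measurableSet_Ioi).1
      (htotal_int.bdd_mul (c := 1) (f := fun s => d / (c * s ^ 2 + d)) ?_ ?_)
    · field_simp
    · exact (continuous_const.div (by fun_prop) fun s => by positivity).aestronglyMeasurable
    · refine ae_of_all _ fun s => ?_
      rw [norm_of_nonneg (by positivity), div_le_one (by positivity)]
      nlinarith [sq_nonneg s]
  -- the involution `s ↦ d / (c s)` turns `v` into `-v` and `c ds` into `d / s² ds`
  have hswap : ∫ s in Ioi 0, c * f (v s) = ∫ s in Ioi 0, d / s ^ 2 * f (v s) := by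
    rw [← integral_Ioi_div_sq_smul_comp_div (div_pos hd hc)]
    refine setIntegral_congr_fun measurableSet_Ioi fun s (hs : 0 < s) => ?_
    have hv : v (d / c / s) = -v s := by simp only [v]; field_simp; ring
    rw [hv, hf, smul_eq_mul]
    field_simp
  have hsplit : ∫ s in Ioi 0, c * f (v s)
      = (∫ s in Ioi 0, (c + d / s ^ 2) * f (v s)) - ∫ s in Ioi 0, d / s ^ 2 * f (v s) := by
    rw [← integral_sub htotal_int hint]
    congr 1; ext s; ring
  change ∫ s in Ioi 0, d / s ^ 2 * f (v s) = _
  linarith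

theorem integral_Ioi_exp_neg_mul_sub_div_div_mul_sqrt {a b : ℝ} (ha : 0 ≤ a) (hb : 0 < b) :
    ∫ t in Ioi 0, exp (-(a * t) - b / t) / (t * √t) = √π / √b * exp (-2 * √(a * b)) := by
  have hgauss : ∫ u, exp (-u ^ 2) = √π := by simpa using integral_gaussian 1
  have hgauss_int : Integrable fun u : ℝ => exp (-u ^ 2) := by
    simpa using integrable_exp_neg_mul_sq one_pos
  have hsb : 0 < √b := sqrt_pos.2 hb
  -- after `t = s²` the exponent is `-(√a s - √b / s)² - 2 √(ab)`
  have hpoint : ∀ s ∈ Ioi (0 : ℝ),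
      (2 * s ^ ((2 : ℝ) - 1)) • (exp (-(a * s ^ (2 : ℝ)) - b / s ^ (2 : ℝ)) /
        (s ^ (2 : ℝ) * √(s ^ (2 : ℝ))))
        = 2 * exp (-2 * √(a * b)) / √b *
          (√b / s ^ 2 * exp (-(√a * s - √b / s) ^ 2)) := fun s (hs : 0 < s) => by
    have hexp : -(a * s ^ 2) - b / s ^ 2 = -(√a * s - √b / s) ^ 2 + -2 * √(a * b) := by
      rw [sqrt_mul ha]
      field_simp
      linear_combination (s ^ 4) * sq_sqrt ha + sq_sqrt hb.le
    norm_num [rpow_two, sqrt_sq hs.le, hexp, exp_add]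
    field_simp
  rw [← integral_comp_rpow_Ioi_of_pos two_pos, setIntegral_congr_fun measurableSet_Ioi hpoint,
    integral_const_mul, integral_Ioi_div_sq_mul_comp_mul_sub_div (fun u => by simp) hgauss_int
      (sqrt_nonneg a) hsb, hgauss]
  field_simp

theorem integrand_eq_mul_exp_neg_mul_sub_div {L κ t : ℝ} (ht : 0 < t) :
    1 / t * (exp (-t / 4) / √(4 * π * t)) * (L / (2 * sinh (L / 2))) *
        exp (-L ^ 2 / (4 * t)) * exp (-κ * t)
      = L / (4 * √π * sinh (L / 2)) *
        (exp (-((1 / 4 + κ) * t) - L ^ 2 / 4 / t) / (t * √t)) := by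
  have hsqrt : √(4 * π * t) = 2 * √π * √t := by
    rw [sqrt_mul (by positivity), sqrt_mul zero_le_four, show (4 : ℝ) = 2 ^ 2 by norm_num,
      sqrt_sq zero_le_two]
  rw [hsqrt, show -((1 / 4 + κ) * t) - L ^ 2 / 4 / t = -t / 4 + -L ^ 2 / (4 * t) + -κ * t by
    field_simp; ring, exp_add, exp_add]
  field_simp
  norm_num

/-- The time integral in the computation of the Brownian loop mass of a free homotopy class:
`∫_0^∞ (1/t) (e^{-t/4}/√(4πt)) (L/(2 sinh(L/2))) e^{-L²/(4t)} e^{-κt} dt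
  = e^{(1/2 - √(1/4+κ)) L} / (e^L - 1)`. -/
theorem stmt8 (L κ : ℝ) (hL : 0 < L) (hκ : -(1 / 4) ≤ κ) :
    (∫ t in Set.Ioi (0 : ℝ), (1 / t) * (Real.exp (-t / 4) / Real.sqrt (4 * π * t)) *
        (L / (2 * Real.sinh (L / 2))) * Real.exp (-L ^ 2 / (4 * t)) * Real.exp (-κ * t)) =
      Real.exp ((1 / 2 - Real.sqrt (1 / 4 + κ)) * L) / (Real.exp L - 1) := by
  have ha : 0 ≤ 1 / 4 + κ := by linarith
  have hsqrt_b : √(L ^ 2 / 4) = L / 2 := by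
    rw [show L ^ 2 / 4 = (L / 2) ^ 2 by ring, sqrt_sq (by positivity)]
  have hsinh : sinh (L / 2) = exp (-(L / 2)) * (exp L - 1) / 2 := by
    rw [sinh_eq, mul_sub, ← exp_add]
    ring_nf
  have hexp_L : 0 < exp L - 1 := by linarith [add_one_lt_exp hL.ne']
  rw [setIntegral_congr_fun measurableSet_Ioi fun t => integrand_eq_mul_exp_neg_mul_sub_div,
    integral_const_mul, integral_Ioi_exp_neg_mul_sub_div_div_mul_sqrt ha (by positivity),
    hsqrt_b, sqrt_mul ha, hsqrt_b, hsinh]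
  generalize √(1 / 4 + κ) = s
  field_simp
  rw [mul_assoc, ← exp_add]
  ring_nf
end

section
/- Let S : (0, ∞) → ℝ be measurable, and suppose there exist constants C > 0, c > 0 with |S(t)| ≤ C·e^{−c/t} for all t ∈ (0, 1] and |S(t) − 1| ≤ C·e^{−c·t} for all t ≥ 1. Then, as κ → 0⁺, ∫_0^∞ e^{−κt}·S(t)/t dt + log κ converges to ∫_0^1 S(t)/t dt + ∫_1^∞ (S(t) − 1)/t dt − γ_EM, where γ_EM is the Euler–Mascheroni constant. -/
/-!
Split the integral at `t = 1` and subtract `1` from `S` on `(1, ∞)`. The hypotheses make `S t / t`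
bounded on `(0, 1]` and `S t - 1` integrable on `(1, ∞)`, so by dominated convergence these two
pieces converge to their values at `κ = 0`. What remains is `∫_1^∞ e^{-κt} / t dt + log κ`, which
after the substitution `u = κ t` and an integration by parts against `log u` equals
`log κ (1 - e^{-κ}) + ∫_κ^∞ log u e^{-u} du`; this tends to `∫_0^∞ log u e^{-u} du = Γ'(1) = -γ`.
-/

open Real MeasureTheory Filter Set Topology

theorem integral_log_mul_exp_neg :
    ∫ t in Ioi (0 : ℝ), log t * exp (-t) = -eulerMascheroniConstant := by
  have hGammaIntegral : HasDerivAt Complex.GammaIntegral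
      ((∫ t in Ioi (0 : ℝ), log t * exp (-t) : ℝ) : ℂ) 1 := by
    convert Complex.hasDerivAt_GammaIntegral (s := 1) (by norm_num) using 1
    rw [← integral_complex_ofReal]
    refine setIntegral_congr_fun measurableSet_Ioi fun t _ => ?_
    simp
  have hGamma : HasDerivAt Complex.Gamma
      ((∫ t in Ioi (0 : ℝ), log t * exp (-t) : ℝ) : ℂ) 1 := by
    refine hGammaIntegral.congr_of_eventuallyEq ?_
    filter_upwards [continuousAt_const.eventually_lt Complex.continuous_re.continuousAt
      (by norm_num : (0 : ℝ) < (1 : ℂ).re)] with s hs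
    exact Complex.Gamma_eq_integral hs
  have hGammaReal := hGamma.real_of_complex
  simp only [Complex.Gamma_ofReal, Complex.ofReal_re] at hGammaReal
  exact hGammaReal.unique hasDerivAt_Gamma_one

theorem integrableOn_log_mul_exp_neg :
    IntegrableOn (fun t => log t * exp (-t)) (Ioi (0 : ℝ)) :=
  -- a non-integrable function has Bochner integral `0`
  .of_integral_ne_zero <| by
    rw [integral_log_mul_exp_neg, neg_ne_zero]
    exact (one_half_pos.trans one_half_lt_eulerMascheroniConstant).ne'

theorem tendsto_setIntegral_Ioi_nhdsGT {E : Type*} [NormedAddCommGroup E] [NormedSpace ℝ E]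
    {f : ℝ → E} {a : ℝ} (hf : IntegrableOn f (Ioi a)) :
    Tendsto (fun b => ∫ x in Ioi b, f x) (𝓝[>] a) (𝓝 (∫ x in Ioi a, f x)) := by
  have hind : ∀ᶠ b in 𝓝[>] a, ∫ x in Ioi a, (Ioi b).indicator f x = ∫ x in Ioi b, f x := by
    filter_upwards [self_mem_nhdsWithin] with b (hb : a < b)
    rw [setIntegral_indicator measurableSet_Ioi, Ioi_inter_Ioi, max_eq_right hb.le]
  refine (tendsto_integral_filter_of_dominated_convergence (fun x => ‖f x‖)
    (.of_forall fun b => hf.aestronglyMeasurable.indicator measurableSet_Ioi)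
    (.of_forall fun b => .of_forall fun x => norm_indicator_le_norm_self f x) hf.norm ?_).congr'
    hind
  filter_upwards [ae_restrict_mem measurableSet_Ioi] with x (hx : a < x)
  refine tendsto_const_nhds.congr' ?_
  filter_upwards [Ioo_mem_nhdsGT hx] with b hb
  exact (indicator_of_mem hb.2 f).symm

theorem integrableOn_Ioi_exp_neg_mul_div {a b : ℝ} (ha : 0 < a) (hb : 0 < b) :
    IntegrableOn (fun t => exp (-b * t) / t) (Ioi a) := by
  refine ((exp_neg_integrableOn_Ioi a hb).const_mul a⁻¹).mono'
    ((continuousOn_of_forall_continuousAt fun t (ht : a < t) => by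
      have := (ha.trans ht).ne'; fun_prop).aestronglyMeasurable measurableSet_Ioi) ?_
  filter_upwards [ae_restrict_mem measurableSet_Ioi] with t (ht : a < t)
  have ht0 : 0 < t := ha.trans ht
  rw [norm_of_nonneg (by positivity), div_eq_inv_mul]
  gcongr

theorem integral_Ioi_exp_neg_div_add_log {κ : ℝ} (hκ : 0 < κ) :
    (∫ u in Ioi κ, exp (-u) / u) + log κ
      = log κ * (1 - exp (-κ)) + ∫ u in Ioi κ, log u * exp (-u) := by
  have hlog : IntegrableOn (fun u => log u * exp (-u)) (Ioi κ) :=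
    integrableOn_log_mul_exp_neg.mono_set (Ioi_subset_Ioi hκ.le)
  have hexp : IntegrableOn (fun u => exp (-u) / u) (Ioi κ) := by
    simpa using integrableOn_Ioi_exp_neg_mul_div hκ one_pos
  have hparts : ∫ u in Ioi κ, (exp (-u) / u - log u * exp (-u)) = 0 - log κ * exp (-κ) := by
    refine integral_Ioi_of_hasDerivAt_of_tendsto' (f := fun u => log u * exp (-u))
      (fun u (hu : κ ≤ u) => ?_) (hexp.sub hlog) ?_
    · have hu0 : u ≠ 0 := (hκ.trans_le hu).ne'
      refine ((hasDerivAt_log hu0).fun_mul (hasDerivAt_neg u).exp).congr_deriv ?_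
      field_simp
      ring
    · refine squeeze_zero' ?_ ?_ (by simpa using tendsto_pow_mul_exp_neg_atTop_nhds_zero 1)
      · filter_upwards [eventually_ge_atTop 1] with u hu
        exact mul_nonneg (log_nonneg hu) (exp_pos _).le
      · filter_upwards [eventually_ge_atTop 1] with u hu
        gcongr
        exact (log_le_sub_one_of_pos (by linarith)).trans (by linarith)
  rw [integral_sub hexp hlog] at hparts
  linear_combination hparts

theorem tendsto_integral_Ioi_exp_neg_div_add_log :
    Tendsto (fun κ => (∫ u in Ioi κ, exp (-u) / u) + log κ) (𝓝[>] 0)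
      (𝓝 (-eulerMascheroniConstant)) := by
  have hboundary : Tendsto (fun κ => log κ * (1 - exp (-κ))) (𝓝[>] 0) (𝓝 0) := by
    refine squeeze_zero_norm' ?_ ((tendsto_log_mul_rpow_nhdsGT_zero one_pos).norm.trans_eq ?_)
    · filter_upwards [self_mem_nhdsWithin] with κ (hκ : 0 < κ)
      have hexp : 0 ≤ 1 - exp (-κ) := by simpa using exp_le_one_iff.2 (neg_nonpos.2 hκ.le)
      rw [norm_mul, norm_mul, rpow_one, norm_of_nonneg hexp, norm_of_nonneg hκ.le]
      gcongr
      linarith [add_one_le_exp (-κ)]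
    · simp
  have htail := tendsto_setIntegral_Ioi_nhdsGT integrableOn_log_mul_exp_neg
  rw [integral_log_mul_exp_neg] at htail
  rw [← zero_add (-eulerMascheroniConstant)]
  refine (hboundary.add htail).congr' ?_
  filter_upwards [self_mem_nhdsWithin] with κ hκ
  exact (integral_Ioi_exp_neg_div_add_log hκ).symm

theorem integral_Ioi_exp_neg_mul_div (a : ℝ) {κ : ℝ} (hκ : 0 < κ) :
    ∫ t in Ioi a, exp (-κ * t) / t = ∫ u in Ioi (κ * a), exp (-u) / u := by
  have h := integral_comp_mul_left_Ioi (fun u => exp (-u) / u) a hκ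
  rw [smul_eq_mul, eq_inv_mul_iff_mul_eq₀ hκ.ne', ← integral_const_mul] at h
  rw [← h]
  refine setIntegral_congr_fun measurableSet_Ioi fun t _ => ?_
  field_simp

theorem tendsto_integral_Ioi_one_exp_neg_mul_div_add_log :
    Tendsto (fun κ => (∫ t in Ioi 1, exp (-κ * t) / t) + log κ) (𝓝[>] 0)
      (𝓝 (-eulerMascheroniConstant)) := by
  refine tendsto_integral_Ioi_exp_neg_div_add_log.congr' ?_
  filter_upwards [self_mem_nhdsWithin] with κ hκ
  rw [integral_Ioi_exp_neg_mul_div 1 hκ, mul_one]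

section ExpNegMulSmul

variable {E : Type*} [NormedAddCommGroup E] [NormedSpace ℝ E] {s : Set ℝ} {g : ℝ → E}

theorem norm_exp_neg_mul_smul_le {κ t : ℝ} (hκ : 0 ≤ κ) (ht : 0 ≤ t) (x : E) :
    ‖exp (-κ * t) • x‖ ≤ ‖x‖ := by
  rw [norm_smul, norm_of_nonneg (exp_pos _).le]
  exact mul_le_of_le_one_left (norm_nonneg x) (exp_le_one_iff.2 (by nlinarith))

theorem aestronglyMeasurable_exp_neg_mul_smul (hg : AEStronglyMeasurable g (volume.restrict s))
    (κ : ℝ) : AEStronglyMeasurable (fun t => exp (-κ * t) • g t) (volume.restrict s) :=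
  (by fun_prop : Continuous fun t => exp (-κ * t)).aestronglyMeasurable.smul hg

theorem integrableOn_exp_neg_mul_smul (hg : IntegrableOn g s) (hs : MeasurableSet s)
    (hs0 : s ⊆ Ici 0) {κ : ℝ} (hκ : 0 ≤ κ) :
    IntegrableOn (fun t => exp (-κ * t) • g t) s :=
  Integrable.mono' hg.norm (aestronglyMeasurable_exp_neg_mul_smul hg.aestronglyMeasurable κ) <|
    (ae_restrict_mem hs).mono fun t ht => norm_exp_neg_mul_smul_le hκ (hs0 ht) (g t)

theorem tendsto_setIntegral_exp_neg_mul_smul (hg : IntegrableOn g s) (hs : MeasurableSet s)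
    (hs0 : s ⊆ Ici 0) :
    Tendsto (fun κ => ∫ t in s, exp (-κ * t) • g t) (𝓝[>] 0) (𝓝 (∫ t in s, g t)) := by
  refine tendsto_integral_filter_of_dominated_convergence (fun t => ‖g t‖)
    (.of_forall (aestronglyMeasurable_exp_neg_mul_smul hg.aestronglyMeasurable)) ?_ hg.norm ?_
  · filter_upwards [self_mem_nhdsWithin] with κ (hκ : 0 < κ)
    filter_upwards [ae_restrict_mem hs] with t ht
    exact norm_exp_neg_mul_smul_le hκ.le (hs0 ht) (g t)
  · refine .of_forall fun t => tendsto_nhdsWithin_of_tendsto_nhds ?_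
    simpa using ((continuous_exp.comp (continuous_neg.mul continuous_const)).smul
      continuous_const).tendsto (0 : ℝ) (f := fun κ : ℝ => exp (-κ * t) • g t)

end ExpNegMulSmul

theorem integral_Ioi_zero_exp_neg_mul_mul_div {f : ℝ → ℝ} {κ : ℝ} (hκ : 0 < κ)
    (hhead : IntegrableOn (fun t => f t / t) (Ioc 0 1))
    (htail : IntegrableOn (fun t => (f t - 1) / t) (Ioi 1)) :
    ∫ t in Ioi 0, exp (-κ * t) * f t / t
      = (∫ t in Ioc 0 1, exp (-κ * t) • (f t / t))
        + (∫ t in Ioi 1, exp (-κ * t) • ((f t - 1) / t)) + ∫ t in Ioi 1, exp (-κ * t) / t := by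
  have hhead' := integrableOn_exp_neg_mul_smul hhead measurableSet_Ioc
    (Ioc_subset_Ioi_self.trans Ioi_subset_Ici_self) hκ.le
  have htail' := integrableOn_exp_neg_mul_smul htail measurableSet_Ioi
    (Ioi_subset_Ici zero_le_one) hκ.le
  have hexp := integrableOn_Ioi_exp_neg_mul_div zero_lt_one hκ
  have hIoc : EqOn (fun t => exp (-κ * t) * f t / t) (fun t => exp (-κ * t) • (f t / t))
      (Ioc 0 1) := fun t _ => by simp only [smul_eq_mul]; ring
  have hIoi : EqOn (fun t => exp (-κ * t) * f t / t)
      (fun t => exp (-κ * t) • ((f t - 1) / t) + exp (-κ * t) / t) (Ioi 1) :=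
    fun t _ => by simp only [smul_eq_mul]; ring
  rw [← Ioc_union_Ioi_eq_Ioi zero_le_one, setIntegral_union Ioc_disjoint_Ioi_same
      measurableSet_Ioi ((integrableOn_congr_fun hIoc measurableSet_Ioc).2 hhead')
      ((integrableOn_congr_fun hIoi measurableSet_Ioi).2 (htail'.add hexp)),
    setIntegral_congr_fun measurableSet_Ioc hIoc, setIntegral_congr_fun measurableSet_Ioi hIoi,
    integral_add htail' hexp, add_assoc]

theorem integrableOn_Ioc_div_of_abs_le_exp_neg_div {f : ℝ → ℝ} {C c : ℝ}
    (hf : AEStronglyMeasurable f (volume.restrict (Ioc 0 1))) (hC : 0 ≤ C) (hc : 0 < c)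
    (hbound : ∀ t ∈ Ioc 0 1, |f t| ≤ C * exp (-c / t)) :
    IntegrableOn (fun t => f t / t) (Ioc 0 1) := by
  refine .of_bound measure_Ioc_lt_top
    (hf.aemeasurable.div measurable_id.aemeasurable).aestronglyMeasurable (C / c) ?_
  filter_upwards [ae_restrict_mem measurableSet_Ioc] with t ht
  have ht0 : 0 < t := ht.1
  have hexp : exp (-c / t) ≤ t / c :=
    calc exp (-c / t) = (exp (c / t))⁻¹ := by rw [neg_div, exp_neg]
      _ ≤ (c / t)⁻¹ := inv_anti₀ (by positivity) (by linarith [add_one_le_exp (c / t)])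
      _ = t / c := inv_div c t
  calc ‖f t / t‖ = |f t| / t := by rw [norm_div, norm_of_nonneg ht0.le, norm_eq_abs]
    _ ≤ C * (t / c) / t := by gcongr; exact (hbound t ht).trans (by gcongr)
    _ = C / c := by field_simp

theorem integrableOn_Ioi_sub_one_div_of_abs_le_exp_neg_mul {f : ℝ → ℝ} {C c : ℝ}
    (hf : AEStronglyMeasurable f (volume.restrict (Ioi 1))) (hc : 0 < c)
    (hbound : ∀ t, 1 ≤ t → |f t - 1| ≤ C * exp (-c * t)) :
    IntegrableOn (fun t => (f t - 1) / t) (Ioi 1) := by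
  have hsub : IntegrableOn (fun t => f t - 1) (Ioi 1) :=
    Integrable.mono' ((exp_neg_integrableOn_Ioi 1 hc).const_mul C)
      (hf.sub aestronglyMeasurable_const) <|
      (ae_restrict_mem measurableSet_Ioi).mono fun t ht => hbound t (le_of_lt ht)
  simp only [div_eq_mul_inv]
  refine hsub.mul_bdd (c := 1) measurable_inv.aestronglyMeasurable ?_
  filter_upwards [ae_restrict_mem measurableSet_Ioi] with t (ht : 1 < t)
  rw [norm_inv, norm_of_nonneg (zero_le_one.trans ht.le)]
  exact inv_le_one_of_one_le₀ ht.le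

/-- Abstract asymptotic lemma behind Theorem 1.2(ii): if `S` is measurable on `(0,∞)`,
`|S t| ≤ C e^{-c/t}` for `t ∈ (0,1]` and `|S t - 1| ≤ C e^{-ct}` for `t ≥ 1`, then as
`κ → 0⁺`, `∫_0^∞ e^{-κt} S t / t dt + log κ` converges to
`∫_0^1 S t / t dt + ∫_1^∞ (S t - 1)/t dt - γ_EM`. -/
theorem stmt12 (S : ℝ → ℝ) (hS : Measurable ((Set.Ioi (0 : ℝ)).restrict S))
    (C c : ℝ) (hC : 0 < C) (hc : 0 < c)
    (h1 : ∀ t ∈ Set.Ioc (0 : ℝ) 1, |S t| ≤ C * Real.exp (-c / t))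
    (h2 : ∀ t : ℝ, 1 ≤ t → |S t - 1| ≤ C * Real.exp (-c * t)) :
    Tendsto
      (fun κ : ℝ => (∫ t in Set.Ioi (0 : ℝ), Real.exp (-κ * t) * S t / t) + Real.log κ)
      (nhdsWithin 0 (Set.Ioi 0))
      (nhds ((∫ t in Set.Ioo (0 : ℝ) 1, S t / t) + (∫ t in Set.Ioi (1 : ℝ), (S t - 1) / t) -
        Real.eulerMascheroniConstant)) := by
  have hSmeas : AEStronglyMeasurable S (volume.restrict (Ioi 0)) :=
    (aemeasurable_restrict_of_measurable_subtype measurableSet_Ioi hS).aestronglyMeasurable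
  have hhead := integrableOn_Ioc_div_of_abs_le_exp_neg_div
    (hSmeas.mono_set Ioc_subset_Ioi_self) hC.le hc h1
  have htail := integrableOn_Ioi_sub_one_div_of_abs_le_exp_neg_mul
    (hSmeas.mono_set (Ioi_subset_Ioi zero_le_one)) hc h2
  have hlim := ((tendsto_setIntegral_exp_neg_mul_smul hhead measurableSet_Ioc
    (Ioc_subset_Ioi_self.trans Ioi_subset_Ici_self)).add
    (tendsto_setIntegral_exp_neg_mul_smul htail measurableSet_Ioi
      (Ioi_subset_Ici zero_le_one))).add tendsto_integral_Ioi_one_exp_neg_mul_div_add_log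
  rw [integral_Ioc_eq_integral_Ioo, ← sub_eq_add_neg] at hlim
  refine hlim.congr' ?_
  filter_upwards [self_mem_nhdsWithin] with κ hκ
  rw [integral_Ioi_zero_exp_neg_mul_mul_div hκ hhead htail]
  ring
end
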